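/- arXiv:1303.5600 — 3 statements merged into one kernel-verified Lean document; each statement's English description precedes it below -/
import Mathlib

section
/- Given λ* > 0 there exists a constant R > 0 such that every C² periodic solution u of u'' + u/|u|^{q+1} = λh with 0 ≤ λ ≤ λ* satisfies |u(t)| ≤ R for all t ∈ [0,1]. -/
/-!
Let `M = ‖u t₀‖` be the maximum of `‖u‖` on `[0,1]`, `e = u t₀ / M` and `ψ = ⟪e, u⟫`, so that `ψ`
also attains its maximum `M` at `t₀`. Wherever `ψ ≥ 1` we have `‖u‖ ≥ ψ ≥ 1`, so the singular term
has size at most `1` and `ψ'' ≥ -(λ* H + 1)` with `H = max ‖h‖`. Leaving the maximum of `ψ` in the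
direction in which `ψ'` does not decrease (periodicity supplies this direction when `t₀` is an
endpoint), this bound keeps `ψ > 1` on the whole period once `M > λ* H + 2`. But integrating the
equation over a period gives `∫ u / ‖u‖^(q+1) = 0`, whose component along `e` would be positive.
-/

open Set MeasureTheory intervalIntegral
open scoped RealInnerProductSpace

section RealLine

variable {f f' f'' : ℝ → ℝ} {a b c C K : ℝ}

lemma mul_sub_le_sub_of_hasDerivAt (hab : a ≤ b) (hf : ∀ t ∈ Icc a b, HasDerivAt f (f' t) t)
    (hC : ∀ t ∈ Ioo a b, C ≤ f' t) : C * (b - a) ≤ f b - f a := by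
  refine (convex_Icc a b).mul_sub_le_image_sub_of_le_deriv
    (fun t ht => (hf t ht).continuousAt.continuousWithinAt)
    (fun t ht => ?_) (fun t ht => ?_) a (left_mem_Icc.2 hab) b (right_mem_Icc.2 hab) hab
  all_goals rw [interior_Icc] at ht
  · exact (hf t (Ioo_subset_Icc_self ht)).differentiableAt.differentiableWithinAt
  · rw [(hf t (Ioo_subset_Icc_self ht)).deriv]
    exact hC t ht

lemma sub_mul_sq_le_of_deriv2_ge (hab : a ≤ b) (hK : 0 ≤ K)
    (hf : ∀ t ∈ Icc a b, HasDerivAt f (f' t) t) (hf' : ∀ t ∈ Icc a b, HasDerivAt f' (f'' t) t)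
    (hf'' : ∀ t ∈ Ioo a b, -K ≤ f'' t) (ha : 0 ≤ f' a) : f a - K * (b - a) ^ 2 ≤ f b := by
  have hslope : ∀ t ∈ Ioo a b, -(K * (b - a)) ≤ f' t := by
    intro t ht
    have := mul_sub_le_sub_of_hasDerivAt ht.1.le
      (fun s hs => hf' s ⟨hs.1, hs.2.trans ht.2.le⟩) (fun s hs => hf'' s ⟨hs.1, hs.2.trans ht.2⟩)
    nlinarith [ht.1, ht.2]
  nlinarith [mul_sub_le_sub_of_hasDerivAt hab hf hslope]

lemma ContinuousOn.exists_first_le (hab : a ≤ b) (hf : ContinuousOn f (Icc a b))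
    (ha : c < f a) (hb : f b ≤ c) : ∃ s ∈ Ioc a b, f s ≤ c ∧ ∀ t ∈ Ico a s, c < f t := by
  set S := Icc a b ∩ f ⁻¹' Iic c
  have hS : IsClosed S := hf.preimage_isClosed_of_isClosed isClosed_Icc isClosed_Iic
  have hSbdd : BddBelow S := ⟨a, fun t ht => ht.1.1⟩
  have hinf : sInf S ∈ S := hS.csInf_mem ⟨b, right_mem_Icc.2 hab, hb⟩ hSbdd
  refine ⟨sInf S, ⟨hinf.1.1.lt_of_ne fun has => ?_, hinf.1.2⟩, hinf.2, fun t ht => ?_⟩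
  · exact (hinf.2.trans_lt (has ▸ ha)).false
  · by_contra! hft
    exact ht.2.not_ge (csInf_le hSbdd ⟨⟨ht.1, ht.2.le.trans hinf.1.2⟩, hft⟩)

lemma lt_of_deriv_nonneg_of_deriv2_ge (hab : a ≤ b) (hK : 0 ≤ K)
    (hf : ∀ t ∈ Icc a b, HasDerivAt f (f' t) t) (hf' : ∀ t ∈ Icc a b, HasDerivAt f' (f'' t) t)
    (hf'' : ∀ t ∈ Ioo a b, c ≤ f t → -K ≤ f'' t) (ha' : 0 ≤ f' a)
    (ha : c + K * (b - a) ^ 2 < f a) : c < f b := by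
  by_contra! hb
  have hca : c < f a := by nlinarith [sq_nonneg (b - a)]
  obtain ⟨s, ⟨has, hsb⟩, hs, hcf⟩ := ContinuousOn.exists_first_le hab
    (fun t ht => (hf t ht).continuousAt.continuousWithinAt) hca hb
  have hdrop := sub_mul_sq_le_of_deriv2_ge has.le hK
    (fun t ht => hf t ⟨ht.1, ht.2.trans hsb⟩) (fun t ht => hf' t ⟨ht.1, ht.2.trans hsb⟩)
    (fun t ht => hf'' t ⟨ht.1, ht.2.trans_le hsb⟩ (hcf t ⟨ht.1.le, ht.2⟩).le) ha'
  have : (s - a) ^ 2 ≤ (b - a) ^ 2 := by gcongr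
  nlinarith

lemma lt_of_deriv_nonpos_of_deriv2_ge (hab : a ≤ b) (hK : 0 ≤ K)
    (hf : ∀ t ∈ Icc a b, HasDerivAt f (f' t) t) (hf' : ∀ t ∈ Icc a b, HasDerivAt f' (f'' t) t)
    (hf'' : ∀ t ∈ Ioo a b, c ≤ f t → -K ≤ f'' t) (hb' : f' b ≤ 0)
    (hb : c + K * (b - a) ^ 2 < f b) : c < f a := by
  have hmem : ∀ {t}, t ∈ Icc (-b) (-a) → -t ∈ Icc a b := fun ht =>
    ⟨by linarith [ht.2], by linarith [ht.1]⟩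
  have hreflect := lt_of_deriv_nonneg_of_deriv2_ge (f := fun t => f (-t))
    (f' := fun t => -f' (-t)) (f'' := fun t => f'' (-t)) (neg_le_neg hab) hK
    (fun t ht => by
      simpa [Function.comp_def] using (hf (-t) (hmem ht)).comp t (hasDerivAt_neg t))
    (fun t ht => by
      simpa [Function.comp_def] using
        ((hf' (-t) (hmem ht)).comp t (hasDerivAt_neg t)).const_mul (-1))
    (fun t ht => hf'' (-t) ⟨by linarith [ht.2], by linarith [ht.1]⟩) (by simpa using hb')
    (by rwa [neg_neg, neg_sub_neg])
  simpa using hreflect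

lemma lt_of_isMaxOn_of_deriv2_ge {t₀ : ℝ} (hab : a ≤ b) (hK : 0 ≤ K)
    (hf : ∀ t ∈ Icc a b, HasDerivAt f (f' t) t) (hf' : ∀ t ∈ Icc a b, HasDerivAt f' (f'' t) t)
    (hper : f a = f b) (hper' : f' a = f' b) (hf'' : ∀ t ∈ Icc a b, c ≤ f t → -K ≤ f'' t)
    (ht₀ : t₀ ∈ Icc a b) (hmax : IsMaxOn f (Icc a b) t₀) (hbig : c + K * (b - a) ^ 2 < f t₀) :
    ∀ s ∈ Icc a b, c < f s := by
  intro s hs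
  have big : ∀ x ∈ Icc a b, f x = f t₀ → c + K * (s - x) ^ 2 < f x := by
    intro x hx hfx
    have : (s - x) ^ 2 ≤ (b - a) ^ 2 :=
      sq_le_sq' (by linarith [hs.1, hx.2]) (by linarith [hs.2, hx.1])
    nlinarith
  have right : ∀ x ∈ Icc a b, x ≤ s → 0 ≤ f' x → f x = f t₀ → c < f s := by
    intro x hx hxs hx' hfx
    have hsub : Icc x s ⊆ Icc a b := Icc_subset_Icc hx.1 hs.2
    exact lt_of_deriv_nonneg_of_deriv2_ge hxs hK (fun t ht => hf t (hsub ht))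
      (fun t ht => hf' t (hsub ht)) (fun t ht => hf'' t (hsub (Ioo_subset_Icc_self ht))) hx'
      (big x hx hfx)
  have left : ∀ x ∈ Icc a b, s ≤ x → f' x ≤ 0 → f x = f t₀ → c < f s := by
    intro x hx hsx hx' hfx
    have hsub : Icc s x ⊆ Icc a b := Icc_subset_Icc hs.1 hx.2
    have hbigx : c + K * (x - s) ^ 2 < f x := by rw [← neg_sub, neg_sq]; exact big x hx hfx
    exact lt_of_deriv_nonpos_of_deriv2_ge hsx hK (fun t ht => hf t (hsub ht))
      (fun t ht => hf' t (hsub ht)) (fun t ht => hf'' t (hsub (Ioo_subset_Icc_self ht))) hx'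
      hbigx
  rcases eq_endpoints_or_mem_Ioo_of_mem_Icc ht₀ with rfl | rfl | hint
  · rcases le_or_gt 0 (f' t₀) with hd | hd
    · exact right t₀ ht₀ hs.1 hd rfl
    · exact left b (right_mem_Icc.2 hab) hs.2 (hper' ▸ hd.le) hper.symm
  · rcases le_or_gt 0 (f' a) with hd | hd
    · exact right a (left_mem_Icc.2 hab) hs.1 hd hper
    · exact left t₀ ht₀ hs.2 (hper' ▸ hd.le) rfl
  · have hd : f' t₀ = 0 :=
      (hmax.isLocalMax (Icc_mem_nhds hint.1 hint.2)).hasDerivAt_eq_zero (hf t₀ ht₀)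
    rcases le_total t₀ s with hts | hst
    · exact right t₀ ht₀ hts hd.ge rfl
    · exact left t₀ ht₀ hst hd.le rfl

end RealLine

section Normed

variable {E : Type*} [NormedAddCommGroup E] [NormedSpace ℝ E] [CompleteSpace E] {a b : ℝ}

lemma integral_eq_zero_of_deriv_add_eq {v v' F g : ℝ → E} (hab : a ≤ b)
    (hv : ∀ t ∈ Icc a b, HasDerivAt v (v' t) t) (hv' : IntervalIntegrable v' volume a b)
    (hper : v a = v b) (hg : IntervalIntegrable g volume a b) (hmean : ∫ t in a..b, g t = 0)
    (heq : ∀ t ∈ Icc a b, v' t + F t = g t) : ∫ t in a..b, F t = 0 := by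
  rw [← uIcc_of_le hab] at hv heq
  calc ∫ t in a..b, F t = ∫ t in a..b, (g t - v' t) :=
        integral_congr fun t ht => eq_sub_of_add_eq' (heq t ht)
    _ = 0 := by
      rw [integral_sub hg hv', hmean, integral_eq_sub_of_hasDerivAt hv hv', hper, sub_self,
        sub_self]

end Normed

section InnerProduct

variable {E : Type*} [NormedAddCommGroup E] [InnerProductSpace ℝ E] {a b : ℝ}

lemma inner_inv_norm_pow_smul_le_one {e x : E} (q : ℕ) (he : ‖e‖ ≤ 1) (hx : 1 ≤ ⟪e, x⟫) :
    ⟪e, (‖x‖ ^ (q + 1))⁻¹ • x⟫ ≤ 1 := by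
  have hex : ⟪e, x⟫ ≤ ‖x‖ := (real_inner_le_norm e x).trans (by nlinarith [norm_nonneg x])
  have hx1 : 1 ≤ ‖x‖ := hx.trans hex
  rw [real_inner_smul_right, inv_mul_le_iff₀ (by positivity), mul_one]
  exact hex.trans (le_self_pow₀ hx1 (Nat.succ_ne_zero q))

lemma one_lt_inner_of_isMaxOn_norm {u u' u'' g : ℝ → E} {K t₀ : ℝ} (q : ℕ)
    (hu : ∀ t ∈ Icc (0 : ℝ) 1, HasDerivAt u (u' t) t)
    (hu' : ∀ t ∈ Icc (0 : ℝ) 1, HasDerivAt u' (u'' t) t) (hper : u 0 = u 1) (hper' : u' 0 = u' 1)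
    (heq : ∀ t ∈ Icc (0 : ℝ) 1, u'' t + (‖u t‖ ^ (q + 1))⁻¹ • u t = g t)
    (hg : ∀ t ∈ Icc (0 : ℝ) 1, ‖g t‖ ≤ K) (ht₀ : t₀ ∈ Icc (0 : ℝ) 1)
    (hmax : IsMaxOn (‖u ·‖) (Icc 0 1) t₀) (hbig : K + 2 < ‖u t₀‖) :
    ∀ t ∈ Icc (0 : ℝ) 1, 1 < ⟪‖u t₀‖⁻¹ • u t₀, u t⟫ := by
  set e := ‖u t₀‖⁻¹ • u t₀
  have hK : 0 ≤ K := (norm_nonneg _).trans (hg 0 (left_mem_Icc.2 zero_le_one))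
  have hu₀ : u t₀ ≠ 0 := norm_pos_iff.1 (by linarith)
  have he : ‖e‖ = 1 := norm_smul_inv_norm hu₀
  have heu : ∀ t, ⟪e, u t⟫ ≤ ‖u t‖ := fun t => by simpa [he] using real_inner_le_norm e (u t)
  have heu₀ : ⟪e, u t₀⟫ = ‖u t₀‖ := by
    rw [real_inner_smul_left, real_inner_self_eq_norm_sq]
    field_simp
  have hinner : ∀ {w w' : ℝ → E}, (∀ t ∈ Icc (0 : ℝ) 1, HasDerivAt w (w' t) t) →
      ∀ t ∈ Icc (0 : ℝ) 1, HasDerivAt (fun s => ⟪e, w s⟫) ⟪e, w' t⟫ t := fun hw t ht => by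
    simpa using (hasDerivAt_const t e).inner ℝ (hw t ht)
  refine lt_of_isMaxOn_of_deriv2_ge (K := K + 1) zero_le_one (by linarith) (hinner hu)
    (hinner hu') (by rw [hper]) (by rw [hper']) (fun t ht h1 => ?_) ht₀
    (fun t ht => (heu t).trans (heu₀ ▸ hmax ht)) (by rw [heu₀]; linarith)
  have hgt : -K ≤ ⟪e, g t⟫ := by
    have hcs := abs_real_inner_le_norm e (g t)
    rw [he, one_mul] at hcs
    linarith [neg_abs_le ⟪e, g t⟫, hg t ht]
  rw [eq_sub_of_add_eq (heq t ht), inner_sub_right]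
  linarith [inner_inv_norm_pow_smul_le_one q he.le h1]

lemma inner_integral_inv_norm_pow_smul_pos [CompleteSpace E] {u : ℝ → E} {e : E} (q : ℕ)
    (hab : a < b) (hu : ContinuousOn u (Icc a b)) (hpos : ∀ t ∈ Icc a b, 0 < ⟪e, u t⟫) :
    0 < ⟪e, ∫ t in a..b, (‖u t‖ ^ (q + 1))⁻¹ • u t⟫ := by
  have hnorm : ∀ t ∈ Icc a b, 0 < ‖u t‖ := fun t ht =>
    norm_pos_iff.2 fun h0 => by simpa [h0] using hpos t ht
  have hF : ContinuousOn (fun t => (‖u t‖ ^ (q + 1))⁻¹ • u t) (Icc a b) :=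
    ((hu.norm.pow _).inv₀ fun t ht => (pow_pos (hnorm t ht) _).ne').smul hu
  rw [← innerSL_apply_apply ℝ, ← (innerSL ℝ e).intervalIntegral_comp_comm
    (hF.intervalIntegrable_of_Icc hab.le)]
  refine intervalIntegral_pos_of_pos_on
    (((innerSL ℝ e).continuous.comp_continuousOn hF).intervalIntegrable_of_Icc hab.le)
    (fun t ht => ?_) hab
  rw [innerSL_apply_apply, real_inner_smul_right]
  exact mul_pos (inv_pos.2 (pow_pos (hnorm t (Ioo_subset_Icc_self ht)) _))
    (hpos t (Ioo_subset_Icc_self ht))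

end InnerProduct

theorem uniform_upper_bound_general (n q : ℕ)
    (h : ℝ → EuclideanSpace ℝ (Fin n)) (hh : Continuous h)
    (hmean : ∫ t in (0:ℝ)..1, h t = 0)
    (lamstar : ℝ) (hls : 0 < lamstar) :
    ∃ R > (0:ℝ), ∀ (lam : ℝ) (u : ℝ → EuclideanSpace ℝ (Fin n)),
      0 ≤ lam → lam ≤ lamstar →
      ContDiff ℝ 2 u → u 0 = u 1 → deriv u 0 = deriv u 1 →
      (∀ t ∈ Icc (0:ℝ) 1, u t ≠ 0) →
      (∀ t ∈ Icc (0:ℝ) 1,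
        deriv (deriv u) t + (‖u t‖ ^ (q + 1))⁻¹ • u t = lam • h t) →
      ∀ t ∈ Icc (0:ℝ) 1, ‖u t‖ ≤ R := by
  obtain ⟨H, hH⟩ := isCompact_Icc.exists_bound_of_continuousOn (hh.continuousOn (s := Icc 0 1))
  have hH0 : 0 ≤ H := (norm_nonneg _).trans (hH 0 (left_mem_Icc.2 zero_le_one))
  refine ⟨lamstar * H + 2, by positivity, fun lam u hlam0 hlam hu hper hper' _ heq => ?_⟩
  by_contra! hlarge
  obtain ⟨t₁, ht₁, hbig⟩ := hlarge
  obtain ⟨t₀, ht₀, hmax⟩ := isCompact_Icc.exists_isMaxOn (nonempty_Icc.2 zero_le_one)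
    (hu.continuous.norm.continuousOn (s := Icc (0 : ℝ) 1))
  have hu' : ContDiff ℝ 1 (deriv u) := hu.deriv'
  have hd1 : ∀ t, HasDerivAt u (deriv u t) t := fun t =>
    (hu.differentiable (by norm_num) t).hasDerivAt
  have hd2 : ∀ t, HasDerivAt (deriv u) (deriv (deriv u) t) t := fun t =>
    (hu'.differentiable one_ne_zero t).hasDerivAt
  have hforce : ∀ t ∈ Icc (0 : ℝ) 1, ‖lam • h t‖ ≤ lamstar * H := fun t ht => by
    rw [norm_smul, Real.norm_of_nonneg hlam0]
    exact mul_le_mul hlam (hH t ht) (norm_nonneg _) hls.le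
  have hpos := one_lt_inner_of_isMaxOn_norm q (fun t _ => hd1 t) (fun t _ => hd2 t) hper hper'
    heq hforce ht₀ hmax (hbig.trans_le (hmax ht₁))
  have hzero := integral_eq_zero_of_deriv_add_eq zero_le_one (fun t _ => hd2 t)
    ((hu'.continuous_deriv le_rfl).intervalIntegrable 0 1) hper'
    ((hh.const_smul lam).intervalIntegrable 0 1)
    (by simp [intervalIntegral.integral_smul, hmean]) heq
  have hcontra := inner_integral_inv_norm_pow_smul_pos q zero_lt_one
    hu.continuous.continuousOn fun t ht => one_pos.trans (hpos t ht)
  rw [hzero, inner_zero_right] at hcontra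
  exact hcontra.false

/-- Uniform a priori upper bound: given `λ* > 0` there is `R > 0` such that every periodic
solution of `u'' + u/|u|^(q+1) = λ h` with `0 ≤ λ ≤ λ*` satisfies `|u(t)| ≤ R` on `[0,1]`. -/
theorem uniform_upper_bound (n q : ℕ) (hq : 2 ≤ q)
    (h : ℝ → EuclideanSpace ℝ (Fin n)) (hh : Continuous h)
    (hmean : ∫ t in (0:ℝ)..1, h t = 0)
    (lamstar : ℝ) (hls : 0 < lamstar) :
    ∃ R > (0:ℝ), ∀ (lam : ℝ) (u : ℝ → EuclideanSpace ℝ (Fin n)),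
      0 ≤ lam → lam ≤ lamstar →
      ContDiff ℝ 2 u → u 0 = u 1 → deriv u 0 = deriv u 1 →
      (∀ t ∈ Icc (0:ℝ) 1, u t ≠ 0) →
      (∀ t ∈ Icc (0:ℝ) 1,
        deriv (deriv u) t + (‖u t‖ ^ (q + 1))⁻¹ • u t = lam • h t) →
      ∀ t ∈ Icc (0:ℝ) 1, ‖u t‖ ≤ R :=
  uniform_upper_bound_general n q h hh hmean lamstar hls
end

section
/- Suppose H : [0,1] → ℝ, H(0) = H(1), is continuous (i.e. Im(H) is contained in a line in ℝ^n, identified with ℝ × ℝ^{n-1} with H = (H₁, 0)). Then for any ε > 0 the repulsive problem z'' = ε (z - H(t))/|z - H(t)|^{q+1} with periodic boundary conditions has no solution z : [0,1] → ℝ^n avoiding the graph values H(t). -/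
/-!
The coordinates transversal to the line satisfy `y'' = c y` with `c > 0`, so
`(y y')' = y'² + c y² ≥ 0`; since `y y'` takes the same value at `0` and `1` it is constant, and
hence `y ≡ 0` on `(0, 1)`. By Rolle's theorem the periodic derivative of the first coordinate `x` has a
critical point `t ∈ (0, 1)`, where `0 = x''(t) = c(t) (x(t) - H₁(t))`. So `z t = H t`.
-/

open Set

theorem MonotoneOn.deriv_eq_zero_of_eq {g : ℝ → ℝ} {a b : ℝ} (hg : MonotoneOn g (Icc a b))
    (hgab : g a = g b) {t : ℝ} (ht : t ∈ Ioo a b) : deriv g t = 0 := by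
  have hconst : EqOn g (fun _ => g a) (Icc a b) := fun s hs =>
    le_antisymm (hgab ▸ hg hs (right_mem_Icc.2 (hs.1.trans hs.2)) hs.2)
      (hg (left_mem_Icc.2 (hs.1.trans hs.2)) hs hs.1)
  rw [(hconst.eventuallyEq_of_mem (Icc_mem_nhds ht.1 ht.2)).deriv_eq, deriv_const]

theorem eq_zero_of_deriv_deriv_eq_pos_mul {y c : ℝ → ℝ} {a b : ℝ} (hy : ContDiff ℝ 2 y)
    (hc : ∀ t ∈ Ioo a b, 0 < c t) (heq : ∀ t ∈ Ioo a b, deriv (deriv y) t = c t * y t)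
    (hab : y a * deriv y a = y b * deriv y b) {t : ℝ} (ht : t ∈ Ioo a b) : y t = 0 := by
  have hdy : Differentiable ℝ (deriv y) := hy.differentiable_deriv_two
  have hderiv (s : ℝ) :
      deriv (fun s => y s * deriv y s) s = deriv y s ^ 2 + y s * deriv (deriv y) s := by
    rw [deriv_fun_mul (hy.differentiable two_ne_zero s) (hdy s)]
    ring
  have hmono : MonotoneOn (fun s => y s * deriv y s) (Icc a b) := by
    refine monotoneOn_of_deriv_nonneg (convex_Icc a b)
      (hy.continuous.mul hdy.continuous).continuousOn
      ((hy.differentiable two_ne_zero).mul hdy).differentiableOn fun s hs => ?_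
    rw [interior_Icc] at hs
    rw [hderiv, heq s hs]
    nlinarith [hc s hs, sq_nonneg (deriv y s), sq_nonneg (y s)]
  have hzero := hmono.deriv_eq_zero_of_eq hab ht
  rw [hderiv, heq t ht] at hzero
  have hsq : c t * y t ^ 2 ≤ 0 := by nlinarith [sq_nonneg (deriv y t)]
  exact pow_eq_zero_iff two_ne_zero |>.1
    (le_antisymm (nonpos_of_mul_nonpos_right hsq (hc t ht)) (sq_nonneg _))

theorem EuclideanSpace.deriv_apply {ι : Type*} [Fintype ι] {z : ℝ → EuclideanSpace ℝ ι} {t : ℝ}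
    (hz : DifferentiableAt ℝ z t) (i : ι) : deriv (fun s => z s i) t = deriv z t i :=
  ((EuclideanSpace.proj (𝕜 := ℝ) i).hasFDerivAt.comp_hasDerivAt t hz.hasDerivAt).deriv

theorem EuclideanSpace.deriv_deriv_apply {ι : Type*} [Fintype ι] {z : ℝ → EuclideanSpace ℝ ι}
    (hz : ContDiff ℝ 2 z) (i : ι) (t : ℝ) :
    deriv (deriv fun s => z s i) t = deriv (deriv z) t i := by
  have hfirst : deriv (fun s => z s i) = fun s => deriv z s i :=
    funext fun s => EuclideanSpace.deriv_apply (hz.differentiable two_ne_zero s) i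
  rw [hfirst, EuclideanSpace.deriv_apply (hz.differentiable_deriv_two t)]

theorem EuclideanSpace.contDiff_apply {ι : Type*} [Fintype ι] {z : ℝ → EuclideanSpace ℝ ι}
    {k : WithTop ℕ∞} (hz : ContDiff ℝ k z) (i : ι) : ContDiff ℝ k fun s => z s i :=
  (EuclideanSpace.proj (𝕜 := ℝ) i).contDiff.comp hz

theorem no_solution_H_on_line_general (n q : ℕ) (hn : 0 < n)
    (eps : ℝ) (heps : 0 < eps)
    (H₁ : ℝ → ℝ)
    (H : ℝ → EuclideanSpace ℝ (Fin n))
    (hH : ∀ t, H t = EuclideanSpace.single (⟨0, hn⟩ : Fin n) (H₁ t))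
    (z : ℝ → EuclideanSpace ℝ (Fin n)) (hz : ContDiff ℝ 2 z)
    (hzper : z 0 = z 1) (hzper' : deriv z 0 = deriv z 1)
    (hne : ∀ t ∈ Icc (0:ℝ) 1, z t ≠ H t)
    (heq : ∀ t ∈ Icc (0:ℝ) 1,
      deriv (deriv z) t = eps • (‖z t - H t‖ ^ (q + 1))⁻¹ • (z t - H t)) :
    False := by
  set i₀ : Fin n := ⟨0, hn⟩
  set c : ℝ → ℝ := fun t => eps * (‖z t - H t‖ ^ (q + 1))⁻¹
  have hc : ∀ t ∈ Icc (0:ℝ) 1, 0 < c t := fun t ht =>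
    mul_pos heps (inv_pos.2 (pow_pos (norm_pos_iff.2 (sub_ne_zero.2 (hne t ht))) _))
  have hcoord (i : Fin n) :
      ∀ t ∈ Icc (0:ℝ) 1, deriv (deriv fun s => z s i) t = c t * (z t i - H t i) := by
    intro t ht
    rw [EuclideanSpace.deriv_deriv_apply hz, heq t ht]
    simp only [PiLp.smul_apply, PiLp.sub_apply, smul_eq_mul, c]
    ring
  have hperiodic (i : Fin n) : deriv (fun s => z s i) 0 = deriv (fun s => z s i) 1 := by
    rw [EuclideanSpace.deriv_apply (hz.differentiable two_ne_zero 0),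
      EuclideanSpace.deriv_apply (hz.differentiable two_ne_zero 1), hzper']
  have htransversal (i : Fin n) (hi : i ≠ i₀) : ∀ t ∈ Ioo (0:ℝ) 1, z t i = 0 := by
    intro t ht
    refine eq_zero_of_deriv_deriv_eq_pos_mul (EuclideanSpace.contDiff_apply hz i)
      (fun s hs => hc s (Ioo_subset_Icc_self hs)) (fun s hs => ?_)
      (by rw [hzper, hperiodic i]) ht
    rw [hcoord i s (Ioo_subset_Icc_self hs), hH, PiLp.single_apply, if_neg hi, sub_zero]
  obtain ⟨t, ht, hcrit⟩ := exists_deriv_eq_zero zero_lt_one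
    ((EuclideanSpace.contDiff_apply hz i₀).continuous_deriv one_le_two).continuousOn (hperiodic i₀)
  have hx : 0 = c t * (z t i₀ - H t i₀) := hcrit ▸ hcoord i₀ t (Ioo_subset_Icc_self ht)
  refine hne t (Ioo_subset_Icc_self ht) (PiLp.ext fun i => ?_)
  by_cases hi : i = i₀
  · subst hi
    linarith [(mul_eq_zero.1 hx.symm).resolve_left (hc t (Ioo_subset_Icc_self ht)).ne']
  · rw [htransversal i hi t ht, hH, PiLp.single_apply, if_neg hi]

/-- If `Im(H)` is contained in a line (here: the first coordinate axis, `H = (H₁, 0)`),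
then the repulsive problem `z'' = ε (z - H(t))/|z - H(t)|^(q+1)` with periodic boundary
conditions has no solution, for any `ε > 0`. -/
theorem no_solution_H_on_line (n q : ℕ) (hn : 0 < n) (hq : 2 ≤ q)
    (eps : ℝ) (heps : 0 < eps)
    (H₁ : ℝ → ℝ) (hH₁ : Continuous H₁) (hper : H₁ 0 = H₁ 1)
    (H : ℝ → EuclideanSpace ℝ (Fin n))
    (hH : ∀ t, H t = EuclideanSpace.single (⟨0, hn⟩ : Fin n) (H₁ t))
    (z : ℝ → EuclideanSpace ℝ (Fin n)) (hz : ContDiff ℝ 2 z)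
    (hzper : z 0 = z 1) (hzper' : deriv z 0 = deriv z 1)
    (hne : ∀ t ∈ Icc (0:ℝ) 1, z t ≠ H t)
    (heq : ∀ t ∈ Icc (0:ℝ) 1,
      deriv (deriv z) t = eps • (‖z t - H t‖ ^ (q + 1))⁻¹ • (z t - H t)) :
    False :=
  no_solution_H_on_line_general n q hn eps heps H₁ H hH z hz hzper hzper' hne heq
end

section
/- Let N(u) = u/|u|^{q+1} for u ∈ ℝ^n \ {0}, q ≥ 2, and let the map x ↦ QN(x) := ∫₀¹ x(t)/|x(t)|^{q+1} dt be defined on the open set of C² periodic curves x : [0,1] → ℝ^n that never vanish. Then 0 is a regular value of QN: at every x with QN(x) = 0, the differential d(QN)(x) : C²_per → ℝ^n is surjective. -/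
/-!
At `u ≠ 0` the differential of `u ↦ u / ‖u‖^m` is `‖u‖^(-m) (I - m P_u)`, where `P_u` is the
orthogonal projection onto `ℝ u`. Since `P_u` is idempotent, for `m ≠ 1` it has the right inverse
`‖u‖^m (I - m/(m-1) P_u)`, which depends smoothly on `u ≠ 0`. Applying this inverse to `w` along a
nonvanishing periodic curve `x` gives a periodic `C²` curve `v` with `dN(x(t))(v(t)) = w` for all
`t`, hence `∫₀¹ dN(x(t))(v(t)) dt = w`.
-/

open RealInnerProductSpace

section

variable {E : Type*} [NormedAddCommGroup E] [InnerProductSpace ℝ E]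

theorem hasFDerivAt_norm_of_ne_zero {u : E} (hu : u ≠ 0) :
    HasFDerivAt (‖·‖) (‖u‖⁻¹ • innerSL ℝ u) u := by
  convert (hasStrictFDerivAt_norm_sq u).hasFDerivAt.sqrt (by positivity) using 1
  · simp [Real.sqrt_sq]
  · ext; simp; ring

theorem fderiv_inv_norm_pow_smul_apply (m : ℕ) {u : E} (hu : u ≠ 0) (v : E) :
    fderiv ℝ (fun u : E => (‖u‖ ^ m)⁻¹ • u) u v =
      (‖u‖ ^ m)⁻¹ • (v - (m * ⟪u, v⟫ / ‖u‖ ^ 2) • u) := by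
  have hu' : ‖u‖ ≠ 0 := norm_ne_zero_iff.2 hu
  have h : HasFDerivAt (fun u : E => (‖u‖ ^ m)⁻¹ • u) _ u :=
    ((hasFDerivAt_inv' (pow_ne_zero m hu')).comp u
      ((hasFDerivAt_norm_of_ne_zero hu).pow m)).smul (hasFDerivAt_id u)
  rw [h.fderiv]
  rcases m with _ | m
  · simp
  simp only [add_tsub_cancel_right, nsmul_eq_mul, Nat.cast_add, Nat.cast_one,
    ContinuousLinearMap.comp_smulₛₗ, Real.ringHom_apply, map_inv₀, ContinuousLinearMap.neg_comp,
    smul_neg, add_apply, smul_apply, ContinuousLinearMap.id_apply,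
    ContinuousLinearMap.smulRight_apply, neg_apply, ContinuousLinearMap.comp_apply,
    coe_innerSL_apply, ContinuousLinearMap.mulLeftRight_apply, smul_eq_mul, neg_smul]
  match_scalars <;> field_simp
  ring

noncomputable def invFDerivInvNormPowSmul (m : ℕ) (u w : E) : E :=
  ‖u‖ ^ m • (w - ((m / (m - 1) : ℝ) * ⟪u, w⟫ / ‖u‖ ^ 2) • u)

theorem fderiv_inv_norm_pow_smul_apply_invFDeriv {m : ℕ} (hm : m ≠ 1) {u : E} (hu : u ≠ 0)
    (w : E) :
    fderiv ℝ (fun u : E => (‖u‖ ^ m)⁻¹ • u) u (invFDerivInvNormPowSmul m u w) = w := by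
  have hu' : ‖u‖ ≠ 0 := norm_ne_zero_iff.2 hu
  have hm' : (m : ℝ) - 1 ≠ 0 := sub_ne_zero.2 (by exact_mod_cast hm)
  rw [fderiv_inv_norm_pow_smul_apply m hu, invFDerivInvNormPowSmul]
  simp only [inner_smul_right, inner_sub_right, real_inner_self_eq_norm_sq]
  match_scalars <;> field_simp
  ring

theorem contDiffAt_invFDerivInvNormPowSmul (m : ℕ) (w : E) {u : E} (hu : u ≠ 0)
    {k : WithTop ℕ∞} :
    ContDiffAt ℝ k (fun u => invFDerivInvNormPowSmul m u w) u := by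
  have hnorm : ContDiffAt ℝ k (‖·‖) u := contDiffAt_norm ℝ hu
  have hinner : ContDiffAt ℝ k (⟪·, w⟫) u := contDiffAt_id.inner ℝ contDiffAt_const
  have hsq : ‖u‖ ^ 2 ≠ 0 := by positivity
  exact (hnorm.pow m).smul (contDiffAt_const.sub
    (((contDiffAt_const.mul hinner).div (hnorm.pow 2) hsq).smul contDiffAt_id))

end

theorem QN_zero_regular_value_general (n q : ℕ) (hq : 2 ≤ q)
    (N : EuclideanSpace ℝ (Fin n) → EuclideanSpace ℝ (Fin n))
    (hN : ∀ u, N u = (‖u‖ ^ (q + 1))⁻¹ • u)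
    (x : ℝ → EuclideanSpace ℝ (Fin n)) (hx : ContDiff ℝ 2 x)
    (hper : x 0 = x 1) (hper' : deriv x 0 = deriv x 1)
    (hne : ∀ t, x t ≠ 0) :
    ∀ w : EuclideanSpace ℝ (Fin n),
      ∃ v : ℝ → EuclideanSpace ℝ (Fin n), ContDiff ℝ 2 v ∧ v 0 = v 1 ∧
        deriv v 0 = deriv v 1 ∧
        (∫ t in (0:ℝ)..1, fderiv ℝ N (x t) (v t)) = w := by
  intro w
  set G := fun u => invFDerivInvNormPowSmul (q + 1) u w
  have hG : ∀ t, ContDiffAt ℝ 2 G (x t) := fun t =>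
    contDiffAt_invFDerivInvNormPowSmul (q + 1) w (hne t)
  have hderiv : ∀ t, deriv (G ∘ x) t = fderiv ℝ G (x t) (deriv x t) := fun t =>
    fderiv_comp_deriv t ((hG t).differentiableAt two_ne_zero) (hx.differentiable two_ne_zero t)
  have hright : ∀ t, fderiv ℝ N (x t) (G (x t)) = w := fun t => by
    rw [show N = _ from funext hN]
    exact fderiv_inv_norm_pow_smul_apply_invFDeriv (by omega) (hne t) w
  refine ⟨G ∘ x, contDiff_iff_contDiffAt.2 fun t => (hG t).comp t hx.contDiffAt,
    congrArg G hper, ?_, ?_⟩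
  · rw [hderiv, hderiv, hper, hper']
  · simp [hright]

/-- `0` is a regular value of `QN(x) = ∫₀¹ x(t)/|x(t)|^(q+1) dt` on the set of
never-vanishing `C²` periodic curves: at every zero `x` of `QN`, the differential
`v ↦ ∫₀¹ dn(x(t))(v(t)) dt` is surjective onto `ℝⁿ`. -/
theorem QN_zero_regular_value (n q : ℕ) (hq : 2 ≤ q)
    (N : EuclideanSpace ℝ (Fin n) → EuclideanSpace ℝ (Fin n))
    (hN : ∀ u, N u = (‖u‖ ^ (q + 1))⁻¹ • u)
    (x : ℝ → EuclideanSpace ℝ (Fin n)) (hx : ContDiff ℝ 2 x)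
    (hper : x 0 = x 1) (hper' : deriv x 0 = deriv x 1)
    (hne : ∀ t, x t ≠ 0)
    (hzero : ∫ t in (0:ℝ)..1, N (x t) = 0) :
    ∀ w : EuclideanSpace ℝ (Fin n),
      ∃ v : ℝ → EuclideanSpace ℝ (Fin n), ContDiff ℝ 2 v ∧ v 0 = v 1 ∧
        deriv v 0 = deriv v 1 ∧
        (∫ t in (0:ℝ)..1, fderiv ℝ N (x t) (v t)) = w :=
  QN_zero_regular_value_general n q hq N hN x hx hper hper' hne
end
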